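/- Let R be a regular F-finite ring of characteristic p, f ∈ R, and λ > 0 a real number. Then τ(f^{pλ}) ⊆ τ(f^λ)^{[p]}. -/

import Mathlib

/-- The `q`-th Frobenius power `I^{[q]}` of an ideal: the ideal generated by `q`-th powers
of elements of `I`. -/
def frobPow {R : Type*} [CommRing R] (I : Ideal R) (q : ℕ) : Ideal R :=
  Ideal.span ((fun x => x ^ q) '' (I : Set R))
/-- `I^{[1/q]}`: the smallest ideal `J` with `I ⊆ J^{[q]}` (in a regular ring). -/
noncomputable def frobRoot {R : Type*} [CommRing R] (I : Ideal R) (q : ℕ) : Ideal R :=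
  sInf {J : Ideal R | I ≤ frobPow J q}

/-- The generalized test ideal `τ(f^c) = ⋃_e (f^{⌈c p^e⌉})^{[1/p^e]}`. -/
noncomputable def testIdeal {R : Type*} [CommRing R] (p : ℕ) (f : R) (c : ℝ) : Ideal R :=
  ⨆ e : ℕ, frobRoot (Ideal.span {f ^ (⌈c * (p : ℝ) ^ e⌉₊)}) (p ^ e)

/-!
Reindexing gives `τ(f^{pλ}) = ⋃_e I_e^{[1/p^e]}` with `I_e = (f^{⌈λ p^{e+1}⌉})`. For
`K = I_e^{[1/p^{e+1}]}` we have `I_e ⊆ K^{[p^{e+1}]} ⊆ (K^{[p]})^{[p^e]}`, hence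
`I_e^{[1/p^e]} ⊆ K^{[p]} ⊆ τ(f^λ)^{[p]}`. The first inclusion says that the infimum defining
`I^{[1/q]}` is attained. It holds because Frobenius is finite and flat, hence projective over a
Noetherian ring, and extending ideals along a finite projective ring map commutes with
arbitrary intersections: `I • ⊤` is computed coordinatewise in a finite free module, and a
finite projective module is a retract of one.
-/

namespace Submodule

variable {R : Type*} [CommRing R]

theorem mem_ideal_smul_top_pi_iff {ι : Type*} [Fintype ι] [DecidableEq ι] (I : Ideal R)
    (x : ι → R) : x ∈ I • (⊤ : Submodule R (ι → R)) ↔ ∀ i, x i ∈ I := by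
  refine ⟨fun hx => ?_, fun hx => ?_⟩
  · exact smul_induction_on hx (fun r hr m _ i => Ideal.mul_mem_right _ _ hr)
      (fun y z hy hz i => add_mem (hy i) (hz i))
  · rw [pi_eq_sum_univ x]
    exact sum_mem fun i _ => smul_mem_smul (hx i) trivial

theorem map_ideal_smul_top_le {M N : Type*} [AddCommGroup M] [Module R M] [AddCommGroup N]
    [Module R N] (g : M →ₗ[R] N) (I : Ideal R) : map g (I • ⊤) ≤ I • ⊤ := by
  rw [map_smul'']
  exact smul_mono_right _ le_top

theorem iInf_ideal_smul_top_le {M : Type*} [AddCommGroup M] [Module R M]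
    [Module.Finite R M] [Module.Projective R M] {ι : Sort*} (I : ι → Ideal R) :
    ⨅ a, I a • (⊤ : Submodule R M) ≤ (⨅ a, I a) • ⊤ := by
  obtain ⟨n, π, hπ⟩ := Module.Finite.exists_fin' R M
  obtain ⟨s, hs⟩ := Module.projective_lifting_property π LinearMap.id hπ
  intro x hx
  have hsx : s x ∈ (⨅ a, I a) • (⊤ : Submodule R (Fin n → R)) := by
    refine (mem_ideal_smul_top_pi_iff _ _).2 fun i => (mem_iInf _).2 fun a => ?_
    exact (mem_ideal_smul_top_pi_iff _ _).1
      (map_ideal_smul_top_le s (I a) (mem_map_of_mem ((mem_iInf _).1 hx a))) i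
  have hπs : π (s x) = x := LinearMap.congr_fun hs x
  exact hπs ▸ map_ideal_smul_top_le π _ (mem_map_of_mem hsx)

end Submodule

theorem Ideal.iInf_map_le_map_iInf {R S : Type*} [CommRing R] [CommRing S] [IsNoetherianRing R]
    {f : R →+* S} (hflat : f.Flat) (hfin : f.Finite) {ι : Sort*} (I : ι → Ideal R) :
    ⨅ a, (I a).map f ≤ (⨅ a, I a).map f := by
  algebraize [f]
  have : Module.Projective R S :=
    have := Module.finitePresentation_of_finite R S
    Module.Flat.projective_of_finitePresentation
  intro x hx
  have hx' : x ∈ ⨅ a, I a • (⊤ : Submodule R S) := by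
    simpa only [Ideal.smul_top_eq_map, RingHom.algebraMap_toAlgebra, Submodule.mem_iInf,
      Submodule.restrictScalars_mem] using hx
  simpa only [Ideal.smul_top_eq_map, RingHom.algebraMap_toAlgebra, Submodule.restrictScalars_mem]
    using Submodule.iInf_ideal_smul_top_le I hx'

section Frobenius

variable {R : Type*} [CommRing R]

theorem frobPow_mono {I J : Ideal R} (h : I ≤ J) (q : ℕ) : frobPow I q ≤ frobPow J q :=
  Ideal.span_mono (Set.image_mono h)

theorem pow_mem_frobPow {I : Ideal R} {x : R} (hx : x ∈ I) (q : ℕ) : x ^ q ∈ frobPow I q :=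
  Ideal.subset_span ⟨x, hx, rfl⟩

theorem frobPow_mul_le (I : Ideal R) (a b : ℕ) :
    frobPow I (a * b) ≤ frobPow (frobPow I a) b := by
  rw [frobPow, Ideal.span_le]
  rintro _ ⟨x, hx, rfl⟩
  simp only [SetLike.mem_coe, pow_mul]
  exact pow_mem_frobPow (pow_mem_frobPow hx a) b

theorem frobRoot_le {I J : Ideal R} {q : ℕ} (h : I ≤ frobPow J q) : frobRoot I q ≤ J :=
  sInf_le h

variable (p : ℕ) [ExpChar R p]

theorem frobPow_eq_map_iterateFrobenius (I : Ideal R) (e : ℕ) :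
    frobPow I (p ^ e) = I.map (iterateFrobenius R p e) :=
  rfl

theorem frobPow_eq_map_frobenius (I : Ideal R) : frobPow I p = I.map (frobenius R p) := by
  simpa only [pow_one, iterateFrobenius_one] using frobPow_eq_map_iterateFrobenius p I 1

theorem frobPow_pow_succ (I : Ideal R) (e : ℕ) :
    frobPow I (p ^ (e + 1)) = frobPow (frobPow I p) (p ^ e) := by
  rw [frobPow_eq_map_iterateFrobenius, frobPow_eq_map_iterateFrobenius,
    frobPow_eq_map_frobenius, Ideal.map_map, ← iterateFrobenius_one R p, ← iterateFrobenius_add]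

variable [IsNoetherianRing R] {p}

theorem iInf_frobPow_le (hflat : (frobenius R p).Flat) (hfin : (frobenius R p).Finite)
    (e : ℕ) {ι : Sort*} (I : ι → Ideal R) :
    ⨅ a, frobPow (I a) (p ^ e) ≤ frobPow (⨅ a, I a) (p ^ e) := by
  induction e generalizing I with
  | zero =>
    simp only [frobPow_eq_map_iterateFrobenius, iterateFrobenius_zero, Ideal.map_id, le_refl]
  | succ e ih =>
    simp only [frobPow_pow_succ]
    refine (ih _).trans (frobPow_mono ?_ _)
    simpa only [frobPow_eq_map_frobenius] using Ideal.iInf_map_le_map_iInf hflat hfin I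

theorem le_frobPow_frobRoot (hflat : (frobenius R p).Flat) (hfin : (frobenius R p).Finite)
    (I : Ideal R) (e : ℕ) : I ≤ frobPow (frobRoot I (p ^ e)) (p ^ e) := by
  have hI : I ≤ ⨅ J : {J : Ideal R // I ≤ frobPow J (p ^ e)}, frobPow J.1 (p ^ e) :=
    le_iInf fun J => J.2
  rw [frobRoot, sInf_eq_iInf']
  exact hI.trans (iInf_frobPow_le hflat hfin e _)

theorem frobRoot_le_frobPow_frobRoot_succ (hflat : (frobenius R p).Flat)
    (hfin : (frobenius R p).Finite) (I : Ideal R) (e : ℕ) :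
    frobRoot I (p ^ e) ≤ frobPow (frobRoot I (p ^ (e + 1))) p := by
  refine frobRoot_le ((le_frobPow_frobRoot hflat hfin I (e + 1)).trans ?_)
  rw [pow_succ']
  exact frobPow_mul_le _ p (p ^ e)

end Frobenius

theorem frobRoot_le_testIdeal {R : Type*} [CommRing R] (p : ℕ) (f : R) (c : ℝ) (e : ℕ) :
    frobRoot (Ideal.span {f ^ ⌈c * (p : ℝ) ^ e⌉₊}) (p ^ e) ≤ testIdeal p f c :=
  le_iSup (fun k => frobRoot (Ideal.span {f ^ ⌈c * (p : ℝ) ^ k⌉₊}) (p ^ k)) e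

theorem stmt6_general {R : Type*} [CommRing R] [IsNoetherianRing R]
    (p : ℕ) [ExpChar R p]
    (hflat : @Module.Flat R R _ _ (Module.compHom R (frobenius R p)))
    (hFfin : @Module.Finite R R _ _ (Module.compHom R (frobenius R p)))
    (f : R) (lam : ℝ) :
    testIdeal p f ((p : ℝ) * lam) ≤ frobPow (testIdeal p f lam) p := by
  refine iSup_le fun e => ?_
  have hexp : (p : ℝ) * lam * (p : ℝ) ^ e = lam * (p : ℝ) ^ (e + 1) := by ring
  rw [hexp]
  exact (frobRoot_le_frobPow_frobRoot_succ hflat hFfin _ e).trans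
    (frobPow_mono (frobRoot_le_testIdeal p f lam (e + 1)) p)

/-- `τ(f^{pλ}) ⊆ τ(f^λ)^{[p]}` for `λ > 0` in a regular `F`-finite ring of characteristic `p`. -/
theorem stmt6 {R : Type*} [CommRing R] [IsDomain R] [IsNoetherianRing R]
    (p : ℕ) [Fact p.Prime] [CharP R p] [ExpChar R p]
    (hflat : @Module.Flat R R _ _ (Module.compHom R (frobenius R p)))
    (hFfin : @Module.Finite R R _ _ (Module.compHom R (frobenius R p)))
    (f : R) (lam : ℝ) (hlam : 0 < lam) :
    testIdeal p f ((p : ℝ) * lam) ≤ frobPow (testIdeal p f lam) p :=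
  stmt6_general p hflat hFfin f lam
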